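/- Let κ be a field of characteristic 0 or of characteristic p > r, let (H^r_s, ∇^r_s) be a free module with integrable connection over O^r = O_{S_κ,s}/𝔪_s^{r+1} as above, and let F^{r,i} ⊆ H^r_s be a submodule preserved by the connection, i.e. ∇^r_s(∂/∂x_j)(F^{r,i}) ⊆ F^{r,i} for all j, which surjects onto its image in the fibre H_s = H^r_s/𝔪_s H^r_s. Then every ∇^r_s-flat section b of H^r_s whose fibre b_s at s lies inside the image F^i_s of F^{r,i} in H_s in fact lies inside F^{r,i}. -/

import Mathlib

/-!
Statement 11 (the flat-sections-respect-the-conjugate-filtration step in the proof of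
Lemma `factorthroughlem`).

Let `κ` be a field of characteristic `0` or of characteristic `p > r`, let
`(H^r_s, ∇^r_s)` be a free module with integrable connection over
`O^r = O_{S_κ,s}/𝔪_s^{r+1}` as above, and let `F^{r,i} ⊆ H^r_s` be a submodule
preserved by the connection (i.e. `∇^r_s(∂/∂x_j)(F^{r,i}) ⊆ F^{r,i}` for all `j`) which
surjects onto its image in the fibre `H_s = H^r_s/𝔪_s H^r_s` (automatic).  Then every
`∇^r_s`-flat section `b` of `H^r_s` whose fibre `b_s` lies in the image `F^i_s` of
`F^{r,i}` in `H_s` in fact lies inside `F^{r,i}`.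

(Membership of the fibre `b_s` in `F^i_s` is expressed as `b ∈ F^{r,i} + 𝔪_s H^r_s`.)
-/

open Set

/-- The order-`r` truncated local ring `O^r = O_{S_κ,s}/𝔪_s^{r+1}` of a smooth variety
at a point with local coordinates, together with a free module with integrable
connection over it. -/
structure TruncatedConn where
  /-- the base field -/
  κ : Type*
  [fieldκ : Field κ]
  /-- the infinitesimal order -/
  r : ℕ
  /-- the number of local coordinates -/
  n : ℕ
  /-- the rank of `H^r_s` -/
  m : ℕ
  /-- `char κ = 0` or `char κ = p > r` -/
  charOK : CharZero κ ∨ ∃ p : ℕ, CharP κ p ∧ r < p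
  /-- `A = O^r = O_{S_κ,s}/𝔪_s^{r+1}` -/
  A : Type*
  [ringA : CommRing A]
  [algA : Algebra κ A]
  /-- the local coordinates `x_1, …, x_n` at `s` -/
  x : Fin n → A
  /-- `𝔪_s^{r+1} = 0` in `A` -/
  trunc : (Ideal.span (Set.range x)) ^ (r + 1) = ⊥
  /-- `A` is local with maximal ideal `𝔪_s = (x_1, …, x_n)` -/
  isLocal : ∀ a : A, IsUnit a ∨ a ∈ Ideal.span (Set.range x)
  /-- the derivations `∂/∂x_i` -/
  der : Fin n → Derivation κ A A
  der_x : ∀ i j, der i (x j) = if i = j then 1 else 0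
  /-- the free module `H^r_s` -/
  H : Type*
  [addH : AddCommGroup H]
  [modH : Module A H]
  [modκH : Module κ H]
  [towerH : IsScalarTower κ A H]
  basisH : Module.Basis (Fin m) A H
  /-- the connection `∇^r_s`, via the covariant derivatives `∇^r_s(∂/∂x_i)` -/
  nab : Fin n → (H →ₗ[κ] H)
  /-- the Leibniz rule -/
  leibniz : ∀ (i : Fin n) (a : A) (v : H), nab i (a • v) = der i a • v + a • nab i v
  /-- integrability: the covariant derivatives commute -/
  integrable : ∀ (i j : Fin n) (v : H), nab i (nab j v) = nab j (nab i v)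

attribute [instance] TruncatedConn.fieldκ TruncatedConn.ringA TruncatedConn.algA
  TruncatedConn.addH TruncatedConn.modH TruncatedConn.modκH TruncatedConn.towerH

namespace TruncatedConn

variable (C : TruncatedConn)

/-- the maximal ideal `𝔪_s ⊆ O^r` -/
def mIdeal : Ideal C.A := Ideal.span (Set.range C.x)

end TruncatedConn

/-!
The Euler operator `N = ∑ⱼ xⱼ ∇ⱼ` kills the flat section `b`, preserves `F`, and acts on
`𝔪ᵏH / 𝔪ᵏ⁺¹H` as multiplication by `k`, since `∑ⱼ xⱼ ∂ⱼ` multiplies a homogeneous polynomial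
of degree `k` by `k`. So if `b = f + c` with `f ∈ F` and `c ∈ 𝔪ᵏH`, then
`k c ≡ N c = -N f ∈ F` modulo `𝔪ᵏ⁺¹H`; as `k ≤ r` is invertible, `b ∈ F + 𝔪ᵏ⁺¹H`.
Starting from `b ∈ F + 𝔪H` and stopping at `𝔪ʳ⁺¹ = 0` gives `b ∈ F`.
-/

section EulerOperator

variable {R A M : Type*} [CommSemiring R] [CommRing A] [Algebra R A] [AddCommGroup M]
  [Module A M] {I : Ideal A} {E : Derivation R A A}

theorem Derivation.apply_sub_natCast_mul_mem_pow_succ (hE : ∀ a, E a ∈ I)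
    (hEI : ∀ a ∈ I, E a - a ∈ I ^ 2) :
    ∀ k : ℕ, ∀ a ∈ I ^ k, E a - k * a ∈ I ^ (k + 1) := by
  intro k
  induction k with
  | zero => intro a _; simpa using hE a
  | succ k ih =>
    intro a ha
    rw [pow_succ] at ha
    refine Submodule.mul_induction_on ha (fun u hu v hv => ?_) (fun u v hu hv => ?_)
    · have key : E (u * v) - ((k + 1 : ℕ) : A) * (u * v) =
          (E u - k * u) * v + u * (E v - v) := by
        rw [Derivation.leibniz, smul_eq_mul, smul_eq_mul]; push_cast; ring
      rw [key]
      refine add_mem ?_ ?_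
      · rw [pow_succ]
        exact Ideal.mul_mem_mul (ih u hu) hv
      · rw [show k + 1 + 1 = k + 2 by rfl, pow_add]
        exact Ideal.mul_mem_mul hu (hEI v hv)
    · rw [map_add, mul_add, add_sub_add_comm]
      exact add_mem hu hv

variable {N : M →+ M} (hN : ∀ (a : A) (v : M), N (a • v) = E a • v + a • N v)
  (hNI : ∀ v, N v ∈ I • (⊤ : Submodule A M))
include hN hNI

theorem sub_natCast_smul_mem_pow_succ_smul_top (hE : ∀ a, E a ∈ I)
    (hEI : ∀ a ∈ I, E a - a ∈ I ^ 2) (k : ℕ) {c : M} (hc : c ∈ I ^ k • (⊤ : Submodule A M)) :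
    N c - (k : A) • c ∈ I ^ (k + 1) • (⊤ : Submodule A M) := by
  refine Submodule.smul_induction_on hc (fun a ha v _ => ?_) (fun u v hu hv => ?_)
  · have key : N (a • v) - (k : A) • a • v = (E a - k * a) • v + a • N v := by
      rw [hN, sub_smul, mul_smul]; abel
    rw [key]
    refine add_mem
      (Submodule.smul_mem_smul (E.apply_sub_natCast_mul_mem_pow_succ hE hEI k a ha) trivial) ?_
    rw [pow_succ, Submodule.mul_smul]
    exact Submodule.smul_mem_smul ha (hNI v)
  · rw [map_add, smul_add, add_sub_add_comm]
    exact add_mem hu hv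

variable {F : Submodule A M} (hNF : ∀ v ∈ F, N v ∈ F) {b : M} (hb : N b = 0)
include hNF hb

theorem mem_sup_pow_succ_smul_top (hE : ∀ a, E a ∈ I) (hEI : ∀ a ∈ I, E a - a ∈ I ^ 2)
    {k : ℕ} (hk : IsUnit (k : A)) (hbk : b ∈ F ⊔ I ^ k • (⊤ : Submodule A M)) :
    b ∈ F ⊔ I ^ (k + 1) • (⊤ : Submodule A M) := by
  obtain ⟨f, hf, c, hc, rfl⟩ := Submodule.mem_sup.mp hbk
  have hNc : N c ∈ F := by
    rw [map_add, add_eq_zero_iff_neg_eq] at hb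
    rw [← hb]
    exact neg_mem (hNF f hf)
  have hkc : (k : A) • c ∈ F ⊔ I ^ (k + 1) • (⊤ : Submodule A M) := by
    rw [← sub_sub_cancel (N c) ((k : A) • c)]
    exact sub_mem (Submodule.mem_sup_left hNc) (Submodule.mem_sup_right
      (sub_natCast_smul_mem_pow_succ_smul_top hN hNI hE hEI k hc))
  have hc' := Submodule.smul_mem _ (↑hk.unit⁻¹ : A) hkc
  rw [smul_smul, IsUnit.val_inv_mul, one_smul] at hc'
  exact add_mem (Submodule.mem_sup_left hf) hc'

theorem mem_of_mem_sup_smul_top (hE : ∀ a, E a ∈ I) (hEI : ∀ a ∈ I, E a - a ∈ I ^ 2)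
    {r : ℕ} (hI : I ^ (r + 1) = ⊥) (hunit : ∀ k : ℕ, 0 < k → k ≤ r → IsUnit (k : A))
    (hb1 : b ∈ F ⊔ I • (⊤ : Submodule A M)) : b ∈ F := by
  have hpow : ∀ k ≤ r, b ∈ F ⊔ I ^ (k + 1) • (⊤ : Submodule A M) := by
    intro k
    induction k with
    | zero => intro _; simpa using hb1
    | succ k ih =>
      intro hk
      exact mem_sup_pow_succ_smul_top hN hNI hNF hb hE hEI (hunit (k + 1) k.succ_pos hk)
        (ih (by omega))
  simpa [hI] using hpow r le_rfl

end EulerOperator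

section EulerDerivation

variable {R A : Type*} [CommSemiring R] [CommRing A] [Algebra R A] {ι : Type*} [Fintype ι]

def eulerDerivation (x : ι → A) (D : ι → Derivation R A A) : Derivation R A A :=
  ∑ i, x i • D i

variable (x : ι → A) (D : ι → Derivation R A A)

theorem eulerDerivation_apply (a : A) : eulerDerivation x D a = ∑ i, x i * D i a := by
  change Derivation.coeFnAddMonoidHom (∑ i, x i • D i) a = _
  simp only [map_sum, Finset.sum_apply, Derivation.coeFnAddMonoidHom_apply,
    Derivation.smul_apply, smul_eq_mul]

theorem eulerDerivation_apply_mem_span (a : A) :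
    eulerDerivation x D a ∈ Ideal.span (range x) := by
  rw [eulerDerivation_apply]
  exact Submodule.sum_mem _ fun i _ => Ideal.mul_mem_right _ _ (Ideal.subset_span ⟨i, rfl⟩)

variable {x D} [DecidableEq ι] (hD : ∀ i j, D i (x j) = if i = j then 1 else 0)
include hD

theorem eulerDerivation_apply_coord (j : ι) : eulerDerivation x D (x j) = x j := by
  simp [eulerDerivation_apply, hD]

theorem eulerDerivation_apply_sub_self_mem_sq {a : A} (ha : a ∈ Ideal.span (range x)) :
    eulerDerivation x D a - a ∈ Ideal.span (range x) ^ 2 := by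
  induction ha using Submodule.span_induction with
  | mem y hy =>
    obtain ⟨j, rfl⟩ := hy
    simp [eulerDerivation_apply_coord hD]
  | zero => simp
  | add y z _ _ hy hz =>
    rw [map_add, add_sub_add_comm]
    exact add_mem hy hz
  | smul c y hy hEy =>
    have key : eulerDerivation x D (c * y) - c * y =
        eulerDerivation x D c * y + c * (eulerDerivation x D y - y) := by
      rw [Derivation.leibniz, smul_eq_mul, smul_eq_mul]; ring
    rw [smul_eq_mul, key]
    refine add_mem ?_ (Ideal.mul_mem_left _ _ hEy)
    rw [sq]
    exact Ideal.mul_mem_mul (eulerDerivation_apply_mem_span x D c) hy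

end EulerDerivation

theorem isUnit_natCast_of_charZero_or_lt_char {κ A : Type*} [Field κ] [Ring A] [Algebra κ A]
    {r k : ℕ} (hchar : CharZero κ ∨ ∃ p : ℕ, CharP κ p ∧ r < p) (hk0 : 0 < k) (hkr : k ≤ r) :
    IsUnit (k : A) := by
  have hk : (k : κ) ≠ 0 := by
    rcases hchar with hchar | ⟨p, hp, hrp⟩
    · exact Nat.cast_ne_zero.mpr hk0.ne'
    · rw [ne_eq, CharP.cast_eq_zero_iff κ p]
      exact fun hdvd => by have := Nat.le_of_dvd hk0 hdvd; omega
  simpa using (isUnit_iff_ne_zero.mpr hk).map (algebraMap κ A)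

namespace TruncatedConn

variable (C : TruncatedConn)

def eulerOp : C.H →+ C.H := ∑ j, C.x j • (C.nab j).toAddMonoidHom

theorem eulerOp_apply (v : C.H) : C.eulerOp v = ∑ j, C.x j • C.nab j v := by
  simp [eulerOp]

theorem eulerOp_smul (a : C.A) (v : C.H) :
    C.eulerOp (a • v) = eulerDerivation C.x C.der a • v + a • C.eulerOp v := by
  simp only [eulerOp_apply, eulerDerivation_apply, C.leibniz, smul_add, Finset.sum_smul,
    Finset.smul_sum, Finset.sum_add_distrib, mul_smul]
  simp only [smul_comm a]

theorem eulerOp_mem_mIdeal_smul_top (v : C.H) :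
    C.eulerOp v ∈ C.mIdeal • (⊤ : Submodule C.A C.H) := by
  rw [eulerOp_apply]
  exact Submodule.sum_mem _ fun j _ =>
    Submodule.smul_mem_smul (Ideal.subset_span ⟨j, rfl⟩) trivial

end TruncatedConn

/-- If the submodule `F ⊆ H^r_s` is preserved by the connection,
then any flat section `b` whose fibre at `s` lies in the image of `F` in the fibre
`H_s` (i.e. `b ∈ F + 𝔪_s H^r_s`) lies in `F`. -/
theorem statement11 (C : TruncatedConn) (F : Submodule C.A C.H)
    (hF : ∀ (j : Fin C.n), ∀ v ∈ F, C.nab j v ∈ F)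
    (b : C.H)
    (hbflat : ∀ j : Fin C.n, C.nab j b = 0)
    (hbs : b ∈ F ⊔ (C.mIdeal • (⊤ : Submodule C.A C.H))) :
    b ∈ F := by
  have hNF : ∀ v ∈ F, C.eulerOp v ∈ F := fun v hv => by
    rw [C.eulerOp_apply]
    exact Submodule.sum_mem _ fun j _ => F.smul_mem _ (hF j v hv)
  have hNb : C.eulerOp b = 0 := by simp [C.eulerOp_apply, hbflat]
  exact mem_of_mem_sup_smul_top C.eulerOp_smul C.eulerOp_mem_mIdeal_smul_top hNF hNb
    (eulerDerivation_apply_mem_span C.x C.der)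
    (fun _ ha => eulerDerivation_apply_sub_self_mem_sq C.der_x ha) C.trunc
    (fun _ hk0 hkr => isUnit_natCast_of_charZero_or_lt_char C.charOK hk0 hkr) hbs
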